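/- For the finite-set library specification, the operation (insert, k, true) is h-voidable if and only if either h contains no operation on the key k, or the history [(insert, k, true)] ++ h is not legal from any state. -/
import Mathlib


universe u v

variable {Q : Type u} {Op : Type v}

inductive Legal (Δ : Op → Q → Q → Prop) : Q → List Op → Q → Prop
  | nil (q : Q) : Legal Δ q [] q
  | snoc {q q' q'' : Q} {h : List Op} {op : Op} :
      Legal Δ q h q' → Δ op q' q'' → Legal Δ q (h ++ [op]) q''

def LegalFrom (Δ : Op → Q → Q → Prop) (q : Q) (h : List Op) : Prop :=
  ∃ q', Legal Δ q h q'

def HEquiv (Δ : Op → Q → Q → Prop) (h₁ h₂ : List Op) : Prop :=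
  ∀ q q' : Q, Legal Δ q h₁ q' ↔ Legal Δ q h₂ q'

def Commutes (Δ : Op → Q → Q → Prop) (op₁ op₂ : Op) : Prop :=
  HEquiv Δ [op₁, op₂] [op₂, op₁]

def Voidable (Δ : Op → Q → Q → Prop) (op : Op) (h : List Op) : Prop :=
  ∀ q : Q, LegalFrom Δ q (op :: h) → LegalFrom Δ q h

inductive SetOp : Type where
  | ins (k : ℕ) (b : Bool)
  | del (k : ℕ) (b : Bool)

def SetOp.key : SetOp → ℕ
  | .ins k _ => k
  | .del k _ => k

def SetDelta : SetOp → Finset ℕ → Finset ℕ → Prop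
  | .ins k true,  S, S' => k ∉ S ∧ S' = insert k S
  | .ins k false, S, S' => k ∈ S ∧ S' = S
  | .del k true,  S, S' => k ∈ S ∧ S' = S.erase k
  | .del k false, S, S' => k ∉ S ∧ S' = S

section Aux

variable {Δ : Op → Q → Q → Prop}

lemma legal_nil_inv {q q' : Q} (H : Legal Δ q [] q') : q' = q := by
  generalize hl : ([] : List Op) = l at H
  cases H with
  | nil => rfl
  | snoc h d => simp at hl

lemma legal_snoc_inv {q q'' : Q} {m : List Op} {op : Op}
    (H : Legal Δ q (m ++ [op]) q'') :
    ∃ q', Legal Δ q m q' ∧ Δ op q' q'' := by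
  generalize hl : m ++ [op] = l at H
  cases H with
  | nil => simp at hl
  | snoc h d =>
    obtain ⟨rfl, rfl⟩ : _ ∧ _ := by
      constructor
      · exact (List.append_inj' hl rfl).1.symm
      · simpa using (List.append_inj' hl rfl).2.symm
    exact ⟨_, h, d⟩

lemma legal_append_of {q q' q'' : Q} {l₁ l₂ : List Op}
    (H₁ : Legal Δ q l₁ q') (H₂ : Legal Δ q' l₂ q'') :
    Legal Δ q (l₁ ++ l₂) q'' := by
  induction H₂ with
  | nil => simpa using H₁
  | snoc h d ih => rw [← List.append_assoc]; exact Legal.snoc ih d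

lemma legal_append_inv {l₂ : List Op} :
    ∀ {l₁ : List Op} {q q'' : Q}, Legal Δ q (l₁ ++ l₂) q'' →
      ∃ q', Legal Δ q l₁ q' ∧ Legal Δ q' l₂ q'' := by
  induction l₂ using List.reverseRecOn with
  | nil => intro l₁ q q'' H; simp at H; exact ⟨q'', H, Legal.nil q''⟩
  | append_singleton l op ih =>
    intro l₁ q q'' H
    rw [← List.append_assoc] at H
    obtain ⟨qm, Hm, d⟩ := legal_snoc_inv H
    obtain ⟨q', H₁, H₂⟩ := ih Hm
    exact ⟨q', H₁, Legal.snoc H₂ d⟩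

lemma legal_cons_inv {q q'' : Q} {op : Op} {l : List Op}
    (H : Legal Δ q (op :: l) q'') :
    ∃ q', Δ op q q' ∧ Legal Δ q' l q'' := by
  rw [show op :: l = [op] ++ l from rfl] at H
  obtain ⟨q₁, Hop, Hl⟩ := legal_append_inv H
  obtain ⟨qm, Hnil, d⟩ := legal_snoc_inv (m := []) (op := op) (by simpa using Hop)
  have := legal_nil_inv Hnil
  subst this
  exact ⟨q₁, d, Hl⟩

end Aux

lemma setDelta_key_mem {op : SetOp} {k : ℕ} {S S' : Finset ℕ}
    (hne : op.key ≠ k) (d : SetDelta op S S') : (k ∈ S' ↔ k ∈ S) := by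
  cases op with
  | ins j b =>
    simp [SetOp.key] at hne
    cases b with
    | true =>
      obtain ⟨h1, h2⟩ : j ∉ S ∧ S' = insert j S := d
      rw [h2]; simp [Finset.mem_insert, Ne.symm hne]
    | false =>
      obtain ⟨h1, h2⟩ : j ∈ S ∧ S' = S := d
      rw [h2]
  | del j b =>
    simp [SetOp.key] at hne
    cases b with
    | true =>
      obtain ⟨h1, h2⟩ : j ∈ S ∧ S' = S.erase j := d
      rw [h2]; simp [Finset.mem_erase, Ne.symm hne]
    | false =>
      obtain ⟨h1, h2⟩ : j ∉ S ∧ S' = S := d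
      rw [h2]

lemma legal_key_mem {k : ℕ} {S S' : Finset ℕ} {h : List SetOp}
    (hk : ∀ op ∈ h, op.key ≠ k) (H : Legal SetDelta S h S') :
    (k ∈ S' ↔ k ∈ S) := by
  induction H with
  | nil => rfl
  | @snoc q' q'' hist op Hl d ih =>
    have h1 : ∀ o ∈ hist, SetOp.key o ≠ k := fun o ho => hk o (by simp [ho])
    have h2 : op.key ≠ k := hk op (by simp)
    rw [setDelta_key_mem h2 d, ih h1]

lemma setDelta_erase {op : SetOp} {k : ℕ} {S S' : Finset ℕ}
    (hne : op.key ≠ k) (d : SetDelta op S S') :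
    SetDelta op (S.erase k) (S'.erase k) := by
  cases op with
  | ins j b =>
    simp [SetOp.key] at hne
    cases b with
    | true =>
      obtain ⟨h1, h2⟩ : j ∉ S ∧ S' = insert j S := d
      exact ⟨fun hj => h1 (Finset.mem_of_mem_erase hj),
        by rw [h2, Finset.erase_insert_of_ne hne]⟩
    | false =>
      obtain ⟨h1, h2⟩ : j ∈ S ∧ S' = S := d
      exact ⟨Finset.mem_erase_of_ne_of_mem hne h1, by rw [h2]⟩
  | del j b =>
    simp [SetOp.key] at hne
    cases b with
    | true =>
      obtain ⟨h1, h2⟩ : j ∈ S ∧ S' = S.erase j := d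
      exact ⟨Finset.mem_erase_of_ne_of_mem hne h1,
        by rw [h2, Finset.erase_right_comm]⟩
    | false =>
      obtain ⟨h1, h2⟩ : j ∉ S ∧ S' = S := d
      exact ⟨fun hj => h1 (Finset.mem_of_mem_erase hj), by rw [h2]⟩

lemma legal_erase {k : ℕ} {S S' : Finset ℕ} {h : List SetOp}
    (hk : ∀ op ∈ h, op.key ≠ k) (H : Legal SetDelta S h S') :
    Legal SetDelta (S.erase k) h (S'.erase k) := by
  induction H with
  | nil => exact Legal.nil _
  | @snoc q' q'' hist op Hl d ih =>
    have h1 : ∀ o ∈ hist, SetOp.key o ≠ k := fun o ho => hk o (by simp [ho])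
    have h2 : op.key ≠ k := hk op (by simp)
    exact Legal.snoc (ih h1) (setDelta_erase h2 d)

lemma exists_first_key {k : ℕ} {h : List SetOp} (hk : ∃ op ∈ h, op.key = k) :
    ∃ h₁ op h₂, h = h₁ ++ op :: h₂ ∧ op.key = k ∧ ∀ o ∈ h₁, o.key ≠ k := by
  induction h with
  | nil => simp at hk
  | cons a t ih =>
    by_cases ha : a.key = k
    · exact ⟨[], a, t, by simp, ha, by simp⟩
    · obtain ⟨op, hop, hopk⟩ := hk
      rcases List.mem_cons.mp hop with rfl | hop
      · exact absurd hopk ha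
      · obtain ⟨h₁, op', h₂, rfl, h1, h2⟩ := ih ⟨op, hop, hopk⟩
        refine ⟨a :: h₁, op', h₂, rfl, h1, ?_⟩
        intro o ho
        rcases List.mem_cons.mp ho with rfl | ho
        · exact ha
        · exact h2 o ho

/-- A successful insert of key k is h-voidable iff h contains no operation on
key k, or prepending the insert to h is not legal from any state. -/
theorem insert_true_voidable_iff (k : ℕ) (h : List SetOp) :
    Voidable SetDelta (SetOp.ins k true) h ↔
      ((∀ op ∈ h, op.key ≠ k) ∨
       ¬ ∃ S : Finset ℕ, LegalFrom SetDelta S (SetOp.ins k true :: h)) := by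
  constructor
  · intro hv
    by_contra hcon
    push_neg at hcon
    obtain ⟨⟨op0, hop0, hop0k⟩, S₀, q', Hfull⟩ := hcon
    obtain ⟨S₁, dins, Hh⟩ := legal_cons_inv Hfull
    obtain ⟨hkS₀, hS₁⟩ : k ∉ S₀ ∧ S₁ = insert k S₀ := dins
    subst hS₁
    obtain ⟨h₁, op, h₂, rfl, hopk, hh₁⟩ := exists_first_key ⟨op0, hop0, hop0k⟩
    obtain ⟨Q₁, HQ₁, Hrest⟩ := legal_append_inv Hh
    obtain ⟨Q₂, dop, _⟩ := legal_cons_inv Hrest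
    have hkQ₁ : k ∈ Q₁ := (legal_key_mem hh₁ HQ₁).mpr (Finset.mem_insert_self k S₀)
    obtain ⟨T, HT⟩ := hv S₀ ⟨q', Hfull⟩
    obtain ⟨P₁, HP₁, HrestP⟩ := legal_append_inv HT
    obtain ⟨P₂, dopP, _⟩ := legal_cons_inv HrestP
    have hkP₁ : k ∉ P₁ := fun hmem => hkS₀ ((legal_key_mem hh₁ HP₁).mp hmem)
    cases op with
    | ins j b =>
      simp [SetOp.key] at hopk; subst hopk
      cases b with
      | true => exact (dop.1 : j ∉ Q₁) hkQ₁
      | false => exact hkP₁ (dopP.1 : j ∈ P₁)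
    | del j b =>
      simp [SetOp.key] at hopk; subst hopk
      cases b with
      | true => exact hkP₁ (dopP.1 : j ∈ P₁)
      | false => exact (dop.1 : j ∉ Q₁) hkQ₁
  · rintro (hk | hnl)
    · rintro S ⟨q', H⟩
      obtain ⟨S₁, dins, Hh⟩ := legal_cons_inv H
      obtain ⟨hkS, hS₁⟩ : k ∉ S ∧ S₁ = insert k S := dins
      subst hS₁
      have := legal_erase hk Hh
      rw [Finset.erase_insert hkS] at this
      exact ⟨_, this⟩
    · intro S hS
      exact absurd ⟨S, hS⟩ hnl
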